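/- arXiv:1811.06509 — 4 statements merged into one kernel-verified Lean document; each statement's English description precedes it below -/
import Mathlib

section
/- The sum of the divisor function over odd integers up to x satisfies I(x) = (1/4) x log x + x·((log 2)/2 + γ/2 − 1/4) + O(√x) as x → ∞. -/
/-!
Writing `n = ab`, the sum counts pairs of odd `a, b` with `ab ≤ N = ⌊x⌋`. By the hyperbola
method with `K = ⌊√N⌋` this is `2 ∑_{a ≤ K odd} #{odd b ≤ N/a} - #{odd a ≤ K}²`. Each count of
odd numbers up to `m` is `m/2 + O(1)`, so the main contribution is `N ∑_{a ≤ K odd} 1/a`, and the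
odd harmonic sum `H_K - H_{⌊K/2⌋}/2 = (log K + log 2 + γ)/2 + O(1/K)` produces the constants.
All error terms are `O(K) = O(√x)`.
-/

open Finset Filter Real Asymptotics

namespace OddDivisorSum

theorem card_filter_odd_Icc (m : ℕ) : #{n ∈ Icc 1 m | Odd n} = (m + 1) / 2 := by
  have h := card_filter_add_card_filter_not (s := Ioc 0 m) (2 ∣ ·)
  rw [Nat.Ioc_filter_dvd_card_eq_div, Nat.card_Ioc] at h
  simp only [Nat.two_dvd_ne_zero, ← Nat.odd_iff] at h
  rw [← zero_add 1, Icc_add_one_left_eq_Ioc]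
  omega

theorem abs_card_filter_odd_Icc_sub_le (m : ℕ) :
    |(#{n ∈ Icc 1 m | Odd n} : ℝ) - m / 2| ≤ 1 / 2 := by
  have h : 2 * #{n ∈ Icc 1 m | Odd n} = m ∨ 2 * #{n ∈ Icc 1 m | Odd n} = m + 1 := by
    rw [card_filter_odd_Icc]; omega
  rw [abs_le]
  rcases h with h | h <;>
  · have h' := congrArg (Nat.cast : ℕ → ℝ) h
    push_cast at h'
    constructor <;> linarith

theorem sum_card_divisors_eq_card_filter_mul_le {p : ℕ → Prop} [DecidablePred p]
    (hp : ∀ a b, p (a * b) ↔ p a ∧ p b) (N : ℕ) :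
    ∑ n ∈ Icc 1 N with p n, #n.divisors =
      #{q ∈ {n ∈ Icc 1 N | p n} ×ˢ {n ∈ Icc 1 N | p n} | q.1 * q.2 ≤ N} := by
  rw [card_eq_sum_card_fiberwise (f := fun q => q.1 * q.2) (t := {n ∈ Icc 1 N | p n})]
  · refine sum_congr rfl fun n hn => ?_
    rw [← card_map, Nat.map_div_right_divisors]
    congr 1
    ext ⟨a, b⟩
    simp only [mem_filter, mem_Icc] at hn
    simp only [Nat.mem_divisorsAntidiagonal, mem_filter, mem_product, mem_Icc]
    constructor
    · rintro ⟨rfl, -⟩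
      obtain ⟨ha, hb⟩ := (hp a b).1 hn.2
      have ha1 : 1 ≤ a := Nat.pos_of_ne_zero (by rintro rfl; simp at hn)
      have hb1 : 1 ≤ b := Nat.pos_of_ne_zero (by rintro rfl; simp at hn)
      exact ⟨⟨⟨⟨⟨ha1, by nlinarith⟩, ha⟩, ⟨hb1, by nlinarith⟩, hb⟩, hn.1.2⟩, rfl⟩
    · rintro ⟨-, rfl⟩
      exact ⟨rfl, by omega⟩
  · rintro ⟨a, b⟩ hq
    simp only [coe_filter, Set.mem_ofPred_eq, mem_product, mem_filter, mem_Icc] at hq ⊢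
    exact ⟨⟨by nlinarith, hq.2⟩, (hp a b).2 ⟨hq.1.1.2, hq.1.2.2⟩⟩

/-- Dirichlet's hyperbola method: every pair with `a * b ≤ N` has `a ≤ √N` or `b ≤ √N`, and the
pairs with both are counted twice on the right. -/
theorem card_filter_mul_le_add_sq (s : Finset ℕ) (N : ℕ) :
    #{q ∈ s ×ˢ s | q.1 * q.2 ≤ N} + #{a ∈ s | a ≤ N.sqrt} ^ 2 =
      2 * ∑ a ∈ s with a ≤ N.sqrt, #{b ∈ s | a * b ≤ N} := by
  set K := N.sqrt
  set P := {q ∈ s ×ˢ s | q.1 * q.2 ≤ N}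
  have hunion : {q ∈ P | q.1 ≤ K} ∪ {q ∈ P | q.2 ≤ K} = P := by
    rw [← filter_or, filter_true_of_mem]
    rintro ⟨a, b⟩ hq
    by_contra! h
    exact (Nat.lt_succ_sqrt N).not_ge ((Nat.mul_le_mul h.1 h.2).trans (mem_filter.1 hq).2)
  have hinter :
      {q ∈ P | q.1 ≤ K} ∩ {q ∈ P | q.2 ≤ K} = {a ∈ s | a ≤ K} ×ˢ {a ∈ s | a ≤ K} := by
    ext ⟨a, b⟩
    simp only [P, mem_inter, mem_filter, mem_product]
    constructor
    · tauto
    · rintro ⟨⟨ha, haK⟩, hb, hbK⟩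
      have : a * b ≤ N := (Nat.mul_le_mul haK hbK).trans (Nat.sqrt_le N)
      tauto
  have hfst : #{q ∈ P | q.1 ≤ K} = ∑ a ∈ s with a ≤ K, #{b ∈ s | a * b ≤ N} := by
    rw [filter_filter, card_filter, sum_product, sum_filter]
    refine sum_congr rfl fun a _ => ?_
    split_ifs with ha
    · simp only [ha, and_true, card_filter]
    · simp only [ha, and_false, if_false, sum_const_zero]
  have hsnd : #{q ∈ P | q.2 ≤ K} = #{q ∈ P | q.1 ≤ K} := by
    refine card_nbij' Prod.swap Prod.swap ?_ ?_ (fun _ _ => rfl) (fun _ _ => rfl) <;>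
    · rintro ⟨a, b⟩
      simp only [P, coe_filter, Set.mem_ofPred_eq, mem_filter, mem_product, Prod.swap_prod_mk, mul_comm]
      tauto
  have := card_union_add_card_inter {q ∈ P | q.1 ≤ K} {q ∈ P | q.2 ≤ K}
  rw [hunion, hinter, card_product, hsnd, hfst] at this
  rw [sq]
  omega

theorem sum_card_divisors_add_sq {p : ℕ → Prop} [DecidablePred p]
    (hp : ∀ a b, p (a * b) ↔ p a ∧ p b) (N : ℕ) :
    ∑ n ∈ Icc 1 N with p n, #n.divisors + #{a ∈ Icc 1 N.sqrt | p a} ^ 2 =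
      2 * ∑ a ∈ Icc 1 N.sqrt with p a, #{b ∈ Icc 1 (N / a) | p b} := by
  have hsqrt : {a ∈ {n ∈ Icc 1 N | p n} | a ≤ N.sqrt} = {a ∈ Icc 1 N.sqrt | p a} := by
    ext a
    simp only [mem_filter, mem_Icc]
    exact ⟨fun ⟨⟨⟨h1, _⟩, h3⟩, h4⟩ => ⟨⟨h1, h4⟩, h3⟩,
      fun ⟨⟨h1, h2⟩, h3⟩ => ⟨⟨⟨h1, h2.trans (Nat.sqrt_le_self N)⟩, h3⟩, h2⟩⟩
  rw [sum_card_divisors_eq_card_filter_mul_le hp, ← hsqrt, card_filter_mul_le_add_sq]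
  refine congrArg (2 * ·) (sum_congr rfl fun a ha => congrArg card ?_)
  have ha : 0 < a := (mem_Icc.1 (mem_filter.1 (mem_filter.1 ha).1).1).1
  ext b
  simp only [mem_filter, mem_Icc]
  rw [Nat.le_div_iff_mul_le ha, mul_comm b a]
  exact ⟨fun ⟨⟨⟨h1, _⟩, h3⟩, h4⟩ => ⟨⟨h1, h4⟩, h3⟩,
    fun ⟨⟨h1, h4⟩, h3⟩ => ⟨⟨⟨h1, (Nat.le_mul_of_pos_left b ha).trans h4⟩, h3⟩, h4⟩⟩

theorem abs_card_filter_odd_Icc_div_sub_le (N a : ℕ) :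
    |(#{b ∈ Icc 1 (N / a) | Odd b} : ℝ) - N / 2 * (a : ℝ)⁻¹| ≤ 1 := by
  have hcount := abs_card_filter_odd_Icc_sub_le (N / a)
  have hdiv : ((N / a : ℕ) : ℝ) ≤ N / a := Nat.cast_div_le
  have hdiv' : (N : ℝ) / a < (N / a : ℕ) + 1 := by
    rw [← Nat.floor_div_eq_div (K := ℝ)]
    exact Nat.lt_floor_add_one _
  rw [abs_le] at hcount ⊢
  rw [show (N : ℝ) / 2 * (a : ℝ)⁻¹ = N / a / 2 by ring]
  constructor <;> linarith

theorem abs_sum_card_filter_odd_Icc_div_sub_le (N K : ℕ) :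
    |∑ a ∈ Icc 1 K with Odd a, (#{b ∈ Icc 1 (N / a) | Odd b} : ℝ) -
        N / 2 * ∑ a ∈ Icc 1 K with Odd a, (a : ℝ)⁻¹| ≤ K := by
  rw [mul_sum, ← sum_sub_distrib]
  calc _ ≤ ∑ a ∈ Icc 1 K with Odd a, (1 : ℝ) := (abs_sum_le_sum_abs _ _).trans <|
        sum_le_sum fun a _ => abs_card_filter_odd_Icc_div_sub_le N a
    _ ≤ K := by
      rw [sum_const, nsmul_one]
      exact_mod_cast (card_filter_le _ _).trans (Nat.card_Icc 1 K).le

theorem eulerMascheroniConstant_lt_harmonic_sub_log {n : ℕ} (hn : n ≠ 0) :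
    eulerMascheroniConstant < harmonic n - log n := by
  simpa [eulerMascheroniSeq', hn] using eulerMascheroniConstant_lt_eulerMascheroniSeq' n

theorem harmonic_sub_log_lt_eulerMascheroniConstant_add {n : ℕ} (hn : n ≠ 0) :
    harmonic n - log n < eulerMascheroniConstant + 1 / n := by
  have hγ : harmonic n - log (n + 1) < eulerMascheroniConstant := by
    simpa [eulerMascheroniSeq] using eulerMascheroniSeq_lt_eulerMascheroniConstant n
  have hn : (0 : ℝ) < n := by positivity
  have hlog : log (n + 1) - log n ≤ 1 / n := by
    rw [← log_div (by positivity) hn.ne']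
    calc log ((n + 1) / n) ≤ (n + 1) / n - 1 := log_le_sub_one_of_pos (by positivity)
      _ = 1 / n := by field_simp; ring
  linarith

theorem sum_filter_odd_inv (K : ℕ) :
    ∑ a ∈ Icc 1 K with Odd a, (a : ℝ)⁻¹ = harmonic K - harmonic (K / 2) / 2 := by
  have heven :
      ∑ a ∈ Icc 1 K with ¬Odd a, (a : ℝ)⁻¹ = ∑ b ∈ Icc 1 (K / 2), (2 * b : ℝ)⁻¹ := by
    refine sum_nbij' (· / 2) (2 * ·) ?_ ?_ ?_ ?_ ?_ <;>
      simp only [mem_filter, mem_Icc, Nat.not_odd_iff_even, even_iff_two_dvd]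
    any_goals intro _ _; omega
    intro a ⟨_, h⟩
    rw [Nat.cast_div h two_ne_zero]
    push_cast
    ring
  have hH (n : ℕ) : (harmonic n : ℝ) = ∑ a ∈ Icc 1 n, (a : ℝ)⁻¹ := by
    simp [harmonic_eq_sum_Icc]
  rw [hH, hH, ← sum_filter_add_sum_filter_not (Icc 1 K) (fun a => Odd a), heven]
  simp only [mul_inv, ← mul_sum]
  ring

theorem abs_sum_filter_odd_inv_sub_le {K : ℕ} (hK : 2 ≤ K) :
    |∑ a ∈ Icc 1 K with Odd a, (a : ℝ)⁻¹ - (log K + log 2 + eulerMascheroniConstant) / 2| ≤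
      2 / K := by
  have hK0 : K ≠ 0 := by omega
  have hM0 : K / 2 ≠ 0 := by omega
  have hK1 := eulerMascheroniConstant_lt_harmonic_sub_log hK0
  have hK2 := harmonic_sub_log_lt_eulerMascheroniConstant_add hK0
  have hM1 := eulerMascheroniConstant_lt_harmonic_sub_log hM0
  have hM2 := harmonic_sub_log_lt_eulerMascheroniConstant_add hM0
  have hKM : 2 * ((K / 2 : ℕ) : ℝ) ≤ K ∧ (K : ℝ) ≤ 2 * ((K / 2 : ℕ) : ℝ) + 1 := by
    constructor <;> norm_cast <;> omega
  have hM : 1 ≤ ((K / 2 : ℕ) : ℝ) := by norm_cast; omega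
  set k : ℝ := (K : ℝ)
  set m : ℝ := ((K / 2 : ℕ) : ℝ)
  have hlog : 0 ≤ log k - log 2 - log m ∧ log k - log 2 - log m ≤ 1 / m / 2 := by
    rw [sub_sub, ← log_mul two_ne_zero (by positivity), ← log_div (by positivity) (by positivity)]
    constructor
    · exact log_nonneg ((one_le_div (by positivity)).2 hKM.1)
    · calc log (k / (2 * m)) ≤ k / (2 * m) - 1 := log_le_sub_one_of_pos (by positivity)
        _ = (k - 2 * m) / m / 2 := by field_simp
        _ ≤ 1 / m / 2 := by gcongr; linarith
  have hmk : 1 / m ≤ 3 * (1 / k) := by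
    rw [← mul_div_assoc, div_le_div_iff₀ (by positivity) (by positivity)]
    linarith
  rw [sum_filter_odd_inv, abs_le, ← mul_one_div]
  constructor <;> linarith

theorem log_sub_two_mul_log_nonneg_and_le {k n : ℝ} (hk : 0 < k) (hkn : k ^ 2 ≤ n)
    (hn : n ≤ k ^ 2 + 2 * k) : 0 ≤ log n - 2 * log k ∧ log n - 2 * log k ≤ 2 / k := by
  have hn0 : 0 < n := (by positivity : 0 < k ^ 2).trans_le hkn
  rw [← log_rpow hk, ← log_div hn0.ne' (by positivity), rpow_two]
  constructor
  · exact log_nonneg ((one_le_div (by positivity)).2 hkn)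
  · calc log (n / k ^ 2) ≤ n / k ^ 2 - 1 := log_le_sub_one_of_pos (by positivity)
      _ = (n - k ^ 2) / k / k := by field_simp
      _ ≤ 2 * k / k / k := by gcongr; linarith
      _ = 2 / k := by field_simp

noncomputable def oddDivisorMainTerm (x : ℝ) : ℝ :=
  (1 / 4) * x * log x + x * (log 2 / 2 + eulerMascheroniConstant / 2 - 1 / 4)

theorem sum_card_divisors_odd_eq (N : ℕ) :
    ∑ n ∈ Icc 1 N with Odd n, (#n.divisors : ℝ) =
      2 * ∑ a ∈ Icc 1 N.sqrt with Odd a, (#{b ∈ Icc 1 (N / a) | Odd b} : ℝ) -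
        (#{a ∈ Icc 1 N.sqrt | Odd a} : ℝ) ^ 2 := by
  rw [eq_sub_iff_add_eq]
  exact_mod_cast sum_card_divisors_add_sq (fun _ _ => Nat.odd_mul) N

theorem sqrt_sq_le_and_le_sqrt_sq_add (N : ℕ) :
    (N.sqrt : ℝ) ^ 2 ≤ N ∧ (N : ℝ) ≤ N.sqrt ^ 2 + 2 * N.sqrt := by
  constructor
  · exact_mod_cast Nat.sqrt_le' N
  · have := Nat.sqrt_le_add N
    norm_cast
    nlinarith

theorem abs_sum_card_divisors_odd_sub_le {N : ℕ} (hN : 4 ≤ N) :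
    |∑ n ∈ Icc 1 N with Odd n, (#n.divisors : ℝ) - oddDivisorMainTerm N| ≤ 10 * √N := by
  have hK : 2 ≤ N.sqrt := Nat.le_sqrt.2 hN
  have hT := abs_sum_card_filter_odd_Icc_div_sub_le N N.sqrt
  have hinv := abs_sum_filter_odd_inv_sub_le hK
  have hC := abs_card_filter_odd_Icc_sub_le N.sqrt
  have hKN := sqrt_sq_le_and_le_sqrt_sq_add N
  have hlog := log_sub_two_mul_log_nonneg_and_le (by positivity) hKN.1 hKN.2
  have hKsqrt : (N.sqrt : ℝ) ≤ √N := (le_sqrt (by positivity) (by positivity)).2 hKN.1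
  have hK2 : (2 : ℝ) ≤ N.sqrt := by exact_mod_cast hK
  set K : ℝ := (N.sqrt : ℝ)
  set T := ∑ a ∈ Icc 1 N.sqrt with Odd a, (#{b ∈ Icc 1 (N / a) | Odd b} : ℝ)
  set h := ∑ a ∈ Icc 1 N.sqrt with Odd a, (a : ℝ)⁻¹
  set C : ℝ := (#{a ∈ Icc 1 N.sqrt | Odd a} : ℝ)
  have hNK : (N : ℝ) ≤ 2 * K ^ 2 := by nlinarith
  have hNinv : |(N : ℝ) * (h - (log K + log 2 + eulerMascheroniConstant) / 2)| ≤ 4 * K := by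
    rw [abs_mul, Nat.abs_cast]
    calc (N : ℝ) * |h - (log K + log 2 + eulerMascheroniConstant) / 2| ≤ N * (2 / K) := by
          gcongr
      _ ≤ 4 * K := by rw [mul_div_assoc', div_le_iff₀ (by positivity)]; nlinarith
  have hNlog : (N : ℝ) * (log N - 2 * log K) ≤ 4 * K := by
    calc (N : ℝ) * (log N - 2 * log K) ≤ N * (2 / K) := by gcongr; exact hlog.2
      _ ≤ 4 * K := by rw [mul_div_assoc', div_le_iff₀ (by positivity)]; nlinarith
  have hC2 : |C ^ 2 - K ^ 2 / 4| ≤ K := by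
    rw [abs_le] at hC ⊢
    constructor <;> nlinarith
  have key : ∑ n ∈ Icc 1 N with Odd n, (#n.divisors : ℝ) - oddDivisorMainTerm N =
      2 * (T - N / 2 * h) + N * (h - (log K + log 2 + eulerMascheroniConstant) / 2) -
        1 / 4 * (N * (log N - 2 * log K)) - (C ^ 2 - K ^ 2 / 4) + (N - K ^ 2) / 4 := by
    rw [sum_card_divisors_odd_eq]; unfold oddDivisorMainTerm; ring
  rw [key]
  rw [abs_le] at hT hNinv hC2 ⊢
  have := mul_nonneg (Nat.cast_nonneg N) hlog.1
  constructor <;> linarith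

theorem abs_oddDivisorMainTerm_floor_sub_le {x : ℝ} (hx : 1 ≤ x) :
    |oddDivisorMainTerm ⌊x⌋₊ - oddDivisorMainTerm x| ≤ 2 * √x := by
  have hN : 1 ≤ ⌊x⌋₊ := Nat.le_floor (by exact_mod_cast hx)
  set n : ℝ := (⌊x⌋₊ : ℝ)
  have hn1 : 1 ≤ n := Nat.one_le_cast.2 hN
  have hnx : n ≤ x := Nat.floor_le (by linarith)
  have hxn : x < n + 1 := Nat.lt_floor_add_one x
  have hlogx : 0 ≤ log x ∧ log x ≤ 2 * (√x - 1) := by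
    refine ⟨log_nonneg hx, ?_⟩
    have := log_le_sub_one_of_pos (sqrt_pos.2 (by linarith : 0 < x))
    rw [log_sqrt (by linarith)] at this
    linarith
  have hlogxn : 0 ≤ n * (log x - log n) ∧ n * (log x - log n) ≤ x - n := by
    rw [← log_div (by linarith) (by linarith)]
    constructor
    · exact mul_nonneg (by linarith) (log_nonneg ((one_le_div (by linarith)).2 hnx))
    · calc n * log (x / n) ≤ n * (x / n - 1) := by
            gcongr
            exact log_le_sub_one_of_pos (by positivity)
        _ = x - n := by field_simp
  have hc : 0 < log 2 / 2 + eulerMascheroniConstant / 2 - 1 / 4 ∧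
      log 2 / 2 + eulerMascheroniConstant / 2 - 1 / 4 < 1 := by
    have := log_two_lt_d9
    have := log_two_gt_d9
    have := one_half_lt_eulerMascheroniConstant
    have := eulerMascheroniConstant_lt_two_thirds
    constructor <;> norm_num at * <;> linarith
  have hdiff : oddDivisorMainTerm x - oddDivisorMainTerm n = (1 / 4) * ((x - n) * log x) +
      (1 / 4) * (n * (log x - log n)) +
      (x - n) * (log 2 / 2 + eulerMascheroniConstant / 2 - 1 / 4) := by
    unfold oddDivisorMainTerm; ring
  have hxnlog : (x - n) * log x ≤ log x := mul_le_of_le_one_left hlogx.1 (by linarith)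
  have hxnc := mul_le_of_le_one_left hc.1.le (by linarith : x - n ≤ 1)
  have hsqrt : 1 ≤ √x := one_le_sqrt.2 hx
  rw [abs_sub_comm, abs_le, hdiff]
  constructor <;> nlinarith

end OddDivisorSum

open OddDivisorSum

theorem odd_divisor_sum_asymptotic :
    (fun x : ℝ =>
        (∑ n ∈ (Finset.Icc 1 ⌊x⌋₊).filter (fun n => Odd n), (n.divisors.card : ℝ)) -
          ((1 / 4) * x * Real.log x +
            x * (Real.log 2 / 2 + Real.eulerMascheroniConstant / 2 - 1 / 4)))
      =O[atTop] fun x : ℝ => Real.sqrt x := by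
  refine isBigO_iff.2 ⟨12, ?_⟩
  filter_upwards [eventually_ge_atTop 4] with x hx
  have hN : 4 ≤ ⌊x⌋₊ := Nat.le_floor (by exact_mod_cast hx)
  have hfloor := abs_sum_card_divisors_odd_sub_le hN
  have hmain := abs_oddDivisorMainTerm_floor_sub_le (by linarith : (1 : ℝ) ≤ x)
  have hsqrt : √(⌊x⌋₊ : ℝ) ≤ √x := sqrt_le_sqrt (Nat.floor_le (by linarith))
  rw [norm_of_nonneg (sqrt_nonneg x), norm_eq_abs]
  calc _ ≤ _ := abs_sub_le _ (oddDivisorMainTerm ⌊x⌋₊) (oddDivisorMainTerm x)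
    _ ≤ 12 * √x := by linarith
end

section
/- The partial sums of D(n) satisfy Σ_{1 ≤ n ≤ x} D(n) = (log 2)·x + O(√x) as x → ∞. -/
/-!
With `d = n / j`, `D(n) = ∑_{d ∣ n} (-1)^(d+1)`, so `∑_{n ≤ N} D(n) = ∑_{d ≤ N} (-1)^(d+1) ⌊N/d⌋`.
Split this sum at `K = ⌊√N⌋`. For `d ≤ K`, replacing `⌊N/d⌋` by `N/d` costs at most `K`, and
`N ∑_{d ≤ K} (-1)^(d+1)/d` is within `N/(K+1) ≤ K+1` of `N log 2` by the alternating series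
error bound. The terms with `d > K` are an alternating sum of the decreasing sequence `⌊N/d⌋`,
so the same bound makes them at most `⌊N/(K+1)⌋ ≤ K` in absolute value.
-/

open Filter Finset Topology

section Alternating

variable {E : Type*} [Ring E] [LinearOrder E] [IsOrderedRing E] [TopologicalSpace E]
  [OrderClosedTopology E] {f : ℕ → E} {l : E}

theorem Antitone.abs_sub_alternating_series_le
    (hfl : Tendsto (fun n ↦ ∑ i ∈ range n, (-1) ^ i * f i) atTop (𝓝 l))
    (hfa : Antitone f) (hf : 0 ≤ f) (n : ℕ) : |l - ∑ i ∈ range n, (-1) ^ i * f i| ≤ f n := by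
  rw [abs_le]
  rcases Nat.even_or_odd' n with ⟨k, rfl | rfl⟩
  · have lower := hfa.alternating_series_le_tendsto hfl k
    have upper := hfa.tendsto_le_alternating_series hfl k
    rw [sum_range_succ, pow_mul, neg_one_sq, one_pow, one_mul] at upper
    exact ⟨(neg_nonpos.2 (hf _)).trans (sub_nonneg.2 lower), sub_le_iff_le_add'.2 upper⟩
  · have lower := hfa.alternating_series_le_tendsto hfl (k + 1)
    have upper := hfa.tendsto_le_alternating_series hfl k
    rw [show 2 * (k + 1) = 2 * k + 1 + 1 by ring, sum_range_succ, pow_succ, pow_mul,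
      neg_one_sq, one_pow, one_mul, neg_one_mul] at lower
    exact ⟨le_sub_iff_add_le'.2 lower, (sub_nonpos.2 upper).trans (hf _)⟩

end Alternating

theorem sum_range_two_mul_alternating_harmonic (m : ℕ) :
    ∑ i ∈ range (2 * m), (-1 : ℝ) ^ i * ((i : ℝ) + 1)⁻¹ = harmonic (2 * m) - harmonic m := by
  induction m with
  | zero => simp
  | succ m ih =>
    rw [show 2 * (m + 1) = 2 * m + 1 + 1 by ring, sum_range_succ, sum_range_succ, ih,
      harmonic_succ, harmonic_succ, harmonic_succ, pow_succ, pow_mul, neg_one_sq, one_pow]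
    push_cast
    field_simp
    ring

theorem tendsto_alternating_harmonic :
    Tendsto (fun n ↦ ∑ i ∈ range n, (-1 : ℝ) ^ i * ((i : ℝ) + 1)⁻¹) atTop (𝓝 (Real.log 2)) := by
  have hanti : Antitone fun i : ℕ ↦ ((i : ℝ) + 1)⁻¹ := fun a b hab ↦ by
    dsimp; gcongr
  have hzero : Tendsto (fun i : ℕ ↦ ((i : ℝ) + 1)⁻¹) atTop (𝓝 0) := by
    simpa using tendsto_one_div_add_atTop_nhds_zero_nat (𝕜 := ℝ)
  obtain ⟨l, hl⟩ := hanti.tendsto_alternating_series_of_tendsto_zero hzero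
  have htwo : Tendsto (fun m : ℕ ↦ 2 * m) atTop atTop :=
    tendsto_id.const_mul_atTop' two_pos
  -- `H_{2m} - H_m = (H_{2m} - log 2m) - (H_m - log m) + log 2 → γ - γ + log 2`
  have heven : Tendsto (fun m : ℕ ↦ ∑ i ∈ range (2 * m), (-1 : ℝ) ^ i * ((i : ℝ) + 1)⁻¹)
      atTop (𝓝 (Real.log 2)) := by
    have hγ := ((Real.tendsto_harmonic_sub_log.comp htwo).sub
      Real.tendsto_harmonic_sub_log).add_const (Real.log 2)
    rw [sub_self, zero_add] at hγ
    refine hγ.congr' ?_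
    filter_upwards [eventually_ne_atTop 0] with m hm
    rw [sum_range_two_mul_alternating_harmonic, Function.comp_apply, Nat.cast_mul, Nat.cast_two,
      Real.log_mul two_ne_zero (Nat.cast_ne_zero.2 hm)]
    ring
  rwa [tendsto_nhds_unique (hl.comp htwo) heven] at hl

theorem sum_Icc_sum_divisors {M : Type*} [AddCommMonoid M] (g : ℕ → M) (N : ℕ) :
    ∑ n ∈ Icc 1 N, ∑ d ∈ n.divisors, g d = ∑ d ∈ Icc 1 N, (N / d) • g d := by
  rw [sum_comm' (t' := Icc 1 N) (s' := fun d ↦ {n ∈ Icc 1 N | d ∣ n})]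
  · refine sum_congr rfl fun d _ ↦ ?_
    rw [sum_const, ← Nat.Ioc_filter_dvd_card_eq_div]
    rfl
  · intro n d
    simp only [mem_Icc, Nat.mem_divisors, mem_filter]
    constructor
    · rintro ⟨⟨hn, hnN⟩, hdn, -⟩
      exact ⟨⟨⟨hn, hnN⟩, hdn⟩, Nat.pos_of_dvd_of_pos hdn hn, (Nat.le_of_dvd hn hdn).trans hnN⟩
    · rintro ⟨⟨⟨hn, hnN⟩, hdn⟩, -⟩
      exact ⟨⟨hn, hnN⟩, hdn, by omega⟩

theorem card_filter_odd_div_sub_card_filter_even_div (n : ℕ) :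
    ((n.divisors.filter fun j => Odd (n / j)).card : ℤ) -
      ((n.divisors.filter fun j => Even (n / j)).card : ℤ) =
    ∑ d ∈ n.divisors, (-1) ^ (d + 1) := by
  rw [← Nat.sum_div_divisors n (fun d ↦ (-1 : ℤ) ^ (d + 1)), natCast_card_filter,
    natCast_card_filter, ← sum_sub_distrib]
  refine sum_congr rfl fun j _ ↦ ?_
  rcases Nat.even_or_odd (n / j) with h | h
  · simp [h, Nat.not_odd_iff_even.2 h, h.add_one.neg_one_pow]
  · simp [h, Nat.not_even_iff_odd.2 h, h.add_one.neg_one_pow]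

theorem sum_Icc_card_filter_odd_div_sub_card_filter_even_div (N : ℕ) :
    ∑ n ∈ Icc 1 N, (((n.divisors.filter fun j => Odd (n / j)).card : ℤ) -
      ((n.divisors.filter fun j => Even (n / j)).card : ℤ)) =
    ∑ i ∈ range N, (-1) ^ i * ((N / (i + 1) : ℕ) : ℤ) := by
  simp_rw [card_filter_odd_div_sub_card_filter_even_div, sum_Icc_sum_divisors]
  rw [← Ico_add_one_right_eq_Icc, sum_Ico_eq_sum_range, Nat.add_sub_cancel]
  refine sum_congr rfl fun i _ ↦ ?_
  rw [nsmul_eq_mul, mul_comm, add_comm 1 i]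
  push_cast
  ring

theorem abs_natCast_div_sub_div_le_one (N d : ℕ) : |((N / d : ℕ) : ℝ) - N / d| ≤ 1 := by
  rw [← Nat.floor_div_eq_div (K := ℝ), abs_sub_comm,
    abs_of_nonneg (sub_nonneg.2 (Nat.floor_le (by positivity)))]
  linarith [Nat.lt_floor_add_one ((N : ℝ) / d)]

theorem abs_sum_range_alternating_div_sub_le (N K : ℕ) :
    |∑ i ∈ range N, (-1 : ℝ) ^ i * ((N / (i + 1) : ℕ) : ℝ) -
      ∑ i ∈ range K, (-1 : ℝ) ^ i * ((N / (i + 1) : ℕ) : ℝ)| ≤ N / (K + 1) := by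
  have hanti : Antitone fun i : ℕ ↦ ((N / (i + 1) : ℕ) : ℝ) := fun a b hab ↦
    Nat.cast_le.2 (Nat.div_le_div_left (by omega) (by omega))
  have hconst : Tendsto (fun n ↦ ∑ i ∈ range n, (-1 : ℝ) ^ i * ((N / (i + 1) : ℕ) : ℝ)) atTop
      (𝓝 (∑ i ∈ range N, (-1 : ℝ) ^ i * ((N / (i + 1) : ℕ) : ℝ))) := by
    refine tendsto_atTop_of_eventually_const (i₀ := N) fun n hn ↦ ?_
    refine (sum_subset (range_subset_range.2 hn) fun i _ hi ↦ ?_).symm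
    rw [Nat.div_eq_of_lt (by rw [mem_range, not_lt] at hi; omega), Nat.cast_zero, mul_zero]
  exact (hanti.abs_sub_alternating_series_le hconst (fun _ ↦ Nat.cast_nonneg _) K).trans
    (by simpa using Nat.cast_div_le (m := N) (n := K + 1))

theorem abs_sum_range_alternating_div_sub_mul_sum_le (N K : ℕ) :
    |∑ i ∈ range K, (-1 : ℝ) ^ i * ((N / (i + 1) : ℕ) : ℝ) -
      N * ∑ i ∈ range K, (-1 : ℝ) ^ i * ((i : ℝ) + 1)⁻¹| ≤ K := by
  rw [mul_sum, ← sum_sub_distrib]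
  refine (abs_sum_le_sum_abs _ _).trans ?_
  calc ∑ i ∈ range K, |(-1 : ℝ) ^ i * ((N / (i + 1) : ℕ) : ℝ) - N * ((-1) ^ i * ((i : ℝ) + 1)⁻¹)|
      = ∑ i ∈ range K, |((N / (i + 1) : ℕ) : ℝ) - N / (i + 1 : ℕ)| := by
        refine sum_congr rfl fun i _ ↦ ?_
        rw [show (N : ℝ) * ((-1) ^ i * ((i : ℝ) + 1)⁻¹) = (-1) ^ i * (N / (i + 1 : ℕ)) by
          push_cast; ring, ← mul_sub, abs_mul, abs_pow, abs_neg, abs_one, one_pow, one_mul]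
    _ ≤ ∑ _i ∈ range K, (1 : ℝ) := sum_le_sum fun i _ ↦ abs_natCast_div_sub_div_le_one _ _
    _ = K := by simp

theorem abs_sum_range_alternating_div_sub_mul_log_two_le (N K : ℕ) :
    |∑ i ∈ range N, (-1 : ℝ) ^ i * ((N / (i + 1) : ℕ) : ℝ) - N * Real.log 2| ≤
      K + 2 * (N / (K + 1)) := by
  have hlog : |N * ∑ i ∈ range K, (-1 : ℝ) ^ i * ((i : ℝ) + 1)⁻¹ - N * Real.log 2| ≤
      N / (K + 1) := by
    rw [← mul_sub, abs_mul, Nat.abs_cast, abs_sub_comm, div_eq_mul_inv]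
    gcongr
    exact Antitone.abs_sub_alternating_series_le tendsto_alternating_harmonic
      (fun a b hab ↦ by dsimp; gcongr) (fun i ↦ by positivity) K
  have htail := abs_sum_range_alternating_div_sub_le N K
  have hhead := abs_sum_range_alternating_div_sub_mul_sum_le N K
  set T := ∑ i ∈ range N, (-1 : ℝ) ^ i * ((N / (i + 1) : ℕ) : ℝ)
  set H := ∑ i ∈ range K, (-1 : ℝ) ^ i * ((N / (i + 1) : ℕ) : ℝ)
  set A := ∑ i ∈ range K, (-1 : ℝ) ^ i * ((i : ℝ) + 1)⁻¹
  calc |T - N * Real.log 2| ≤ |T - H| + (|H - N * A| + |N * A - N * Real.log 2|) :=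
        (abs_sub_le _ H _).trans (add_le_add_right (abs_sub_le _ _ _) _)
    _ ≤ N / (K + 1) + (K + N / (K + 1)) := by gcongr
    _ = _ := by ring

theorem abs_sum_range_alternating_div_sub_mul_log_two_le_sqrt (N : ℕ) :
    |∑ i ∈ range N, (-1 : ℝ) ^ i * ((N / (i + 1) : ℕ) : ℝ) - N * Real.log 2| ≤ 3 * √N + 2 := by
  have hK : (N.sqrt : ℝ) ≤ √N := Real.nat_sqrt_le_real_sqrt
  have hN : (N : ℝ) / (N.sqrt + 1) ≤ N.sqrt + 1 := by
    rw [div_le_iff₀ (by positivity)]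
    exact_mod_cast (Nat.lt_succ_sqrt N).le
  linarith [abs_sum_range_alternating_div_sub_mul_log_two_le N N.sqrt]

theorem parity_difference_average :
    (fun x : ℝ =>
        (∑ n ∈ Finset.Icc 1 ⌊x⌋₊,
            (((n.divisors.filter fun j => Odd (n / j)).card : ℤ) -
              ((n.divisors.filter fun j => Even (n / j)).card : ℤ) : ℤ) : ℤ) -
          Real.log 2 * x)
      =O[atTop] fun x : ℝ => Real.sqrt x := by
  refine Asymptotics.IsBigO.of_bound 6 ?_
  filter_upwards [eventually_ge_atTop 1] with x hx
  set N := ⌊x⌋₊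
  have hNx : (N : ℝ) ≤ x := Nat.floor_le (by linarith)
  have hxN : x < N + 1 := Nat.lt_floor_add_one x
  have hsqrt : √N ≤ √x := Real.sqrt_le_sqrt hNx
  have hone : 1 ≤ √x := Real.one_le_sqrt.2 hx
  have hlog_nonneg : 0 ≤ Real.log 2 := Real.log_nonneg one_le_two
  have hlog_le_one : Real.log 2 ≤ 1 := by linarith [Real.log_two_lt_d9]
  rw [Real.norm_eq_abs, Real.norm_of_nonneg (Real.sqrt_nonneg _),
    sum_Icc_card_filter_odd_div_sub_card_filter_even_div, Int.cast_sum]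
  simp only [Int.cast_mul, Int.cast_pow, Int.cast_neg, Int.cast_one, Int.cast_natCast]
  calc _ = |(∑ i ∈ range N, (-1 : ℝ) ^ i * ((N / (i + 1) : ℕ) : ℝ) - N * Real.log 2) -
        Real.log 2 * (x - N)| := by congr 1; ring
    _ ≤ (3 * √N + 2) + 1 := by
      refine (abs_sub _ _).trans (add_le_add
        (abs_sum_range_alternating_div_sub_mul_log_two_le_sqrt N) ?_)
      rw [abs_of_nonneg (by nlinarith)]
      nlinarith
    _ ≤ 6 * √x := by linarith
end

section
/- If w is a balanced infinite binary word with letter-frequency β_w = lim_{n→∞} (1/n)·#{1 ≤ j ≤ n : w(j) = b}, then for every positive integer n, |β_w·n − #{1 ≤ j ≤ n : w(j) = b}| ≤ 1. -/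
open Filter

/-
Cutting the prefix of length `k * n` into `k` blocks of length `n`, balancedness puts its number
of `b`'s within `k` of `k` times that of the prefix of length `n`. Dividing by `k` and letting
`k → ∞` gives `|β n - #b(w(1..n))| ≤ 1`.
-/

inductive Letter
  | a
  | b
  deriving DecidableEq

/-- Number of occurrences of the letter `b` in the factor `w(n), …, w(n+L-1)`. -/
def countB (w : ℕ → Letter) (n L : ℕ) : ℕ :=
  ((Finset.Ico n (n + L)).filter fun j => w j = Letter.b).card

/-- A word is balanced if any two factors of equal length contain numbers of `b`'s
differing by at most 1. -/
def IsBalanced (w : ℕ → Letter) : Prop :=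
  ∀ n₁ n₂ L : ℕ, 1 ≤ n₁ → 1 ≤ n₂ → 1 ≤ L →
    |(countB w n₁ L : ℤ) - (countB w n₂ L : ℤ)| ≤ 1

lemma countB_add (w : ℕ → Letter) (m a b : ℕ) :
    countB w m (a + b) = countB w m a + countB w (m + a) b := by
  unfold countB
  rw [← add_assoc, ← Finset.card_union_of_disjoint, ← Finset.filter_union,
    Finset.Ico_union_Ico_eq_Ico (by omega) (by omega)]
  exact Finset.disjoint_filter_filter (Finset.Ico_disjoint_Ico_consecutive m (m + a) (m + a + b))

lemma card_filter_Icc_one_eq_countB (w : ℕ → Letter) (t : ℕ) :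
    ((Finset.Icc 1 t).filter fun j => w j = Letter.b).card = countB w 1 t := by
  rw [countB, add_comm, Finset.Ico_add_one_right_eq_Icc]

lemma IsBalanced.abs_countB_mul_sub_le {w : ℕ → Letter} (hw : IsBalanced w) {n : ℕ}
    (hn : 1 ≤ n) (k : ℕ) : |(countB w 1 (k * n) : ℤ) - k * countB w 1 n| ≤ k := by
  induction k with
  | zero => simp [countB]
  | succ k ih =>
    have hsplit : countB w 1 ((k + 1) * n) = countB w 1 (k * n) + countB w (1 + k * n) n := by
      rw [add_mul, one_mul, countB_add]
    have hblock : |(countB w (1 + k * n) n : ℤ) - countB w 1 n| ≤ 1 :=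
      hw (1 + k * n) 1 n (by omega) le_rfl hn
    push_cast [hsplit]
    calc |(countB w 1 (k * n) : ℤ) + countB w (1 + k * n) n - (k + 1) * countB w 1 n|
        = |((countB w 1 (k * n) : ℤ) - k * countB w 1 n)
            + ((countB w (1 + k * n) n : ℤ) - countB w 1 n)| := by ring_nf
      _ ≤ |(countB w 1 (k * n) : ℤ) - k * countB w 1 n|
            + |(countB w (1 + k * n) n : ℤ) - countB w 1 n| := abs_add_le _ _
      _ ≤ k + 1 := add_le_add ih hblock

lemma abs_mul_sub_le_of_tendsto_div {s : ℕ → ℝ} {β C : ℝ}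
    (hs : Tendsto (fun m : ℕ => s m / m) atTop (nhds β)) {n : ℕ} (hn : 1 ≤ n)
    (hblocks : ∀ k : ℕ, |s (k * n) - k * s n| ≤ k * C) :
    |β * n - s n| ≤ C := by
  have hnR : (n : ℝ) ≠ 0 := by positivity
  have hmul : Tendsto (fun k : ℕ => k * n) atTop atTop :=
    tendsto_id.atTop_mul_const' (by omega)
  have hlim : Tendsto (fun k : ℕ => s (k * n) / k) atTop (nhds (β * n)) := by
    refine ((hs.comp hmul).mul_const (n : ℝ)).congr fun k => ?_
    simp only [Function.comp_apply, Nat.cast_mul]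
    field_simp
  have hclose : ∀ k : ℕ, 1 ≤ k → |s (k * n) / k - s n| ≤ C := by
    intro k hk
    have hkR : (0 : ℝ) < k := by exact_mod_cast hk
    rw [div_sub' hkR.ne', abs_div, abs_of_pos hkR, div_le_iff₀ hkR, mul_comm C]
    exact hblocks k
  exact le_of_tendsto (hlim.sub_const _).abs (eventually_atTop.mpr ⟨1, hclose⟩)

theorem balanced_frequency_bound (w : ℕ → Letter) (hw : IsBalanced w) (β : ℝ)
    (hβ : Tendsto
      (fun n : ℕ => (((Finset.Icc 1 n).filter fun j => w j = Letter.b).card : ℝ) / n)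
      atTop (nhds β))
    (n : ℕ) (hn : 1 ≤ n) :
    |β * n - (((Finset.Icc 1 n).filter fun j => w j = Letter.b).card : ℝ)| ≤ 1 := by
  simp only [card_filter_Icc_one_eq_countB] at hβ ⊢
  refine abs_mul_sub_le_of_tendsto_div hβ hn fun k => ?_
  rw [mul_one]
  exact_mod_cast hw.abs_countB_mul_sub_le hn k
end

section
/- Let w : ℕ → {a,b} and suppose w is balanced with letter frequency β_w ∈ (0,1) for the letter b (so |β_w n − #{j ≤ n : w(j) = b}| ≤ 1 for all n). Define D_w(n) = Σ_{d ∣ n, w(d)=b} (−1)^{n/d+1} and M_w(x) = Σ_{n ≤ x} D_w(n)(1 − n/x). Then for every δ > 0, M_w(x) = (β_w log 2 / 2)·x + O_δ(x^{1/3+δ}) as x → ∞. -/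
open Filter

/-- The parity-difference function associated to the word `w`. -/
def Dw (w : ℕ → Letter) (n : ℕ) : ℤ :=
  ∑ d ∈ n.divisors, (if w d = Letter.b then (-1 : ℤ) ^ (n / d + 1) else 0)

/-- The mollified partial sums of `Dw`. -/
noncomputable def Mw (w : ℕ → Letter) (x : ℝ) : ℝ :=
  ∑ n ∈ Finset.Icc 1 ⌊x⌋₊, (Dw w n : ℝ) * (1 - n / x)


open Finset Asymptotics

/-!
Write `χ` for the indicator of the positions of `b` and `φ_x(n) = max(0, 1 - n/x)` (`bIndicator`
and `mollifier` below), so that `M_w(x) = ∑_{q ≤ x} (-1)^(q+1) ∑_{d ≤ x} χ(d) φ_x(dq)`.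
Splitting `χ = (χ - β) + β` separates two contributions. Balancedness says the partial sums of
`χ - β` stay bounded, so by summation by parts the inner sum over `d` is `O(1)` and changes by
`O(1/q)` from `q` to `q + 1`; a second summation by parts over the alternating signs bounds the
first contribution by `O(log x)`. The second is `β` times the same sum for the constant word,
where the inner sum is `x/(2q) - 1/2 + O(q/x)`. Cutting the `q`-sum at `Q ≈ x^(2/3)`, the
alternating harmonic series gives `(log 2 / 2) x` up to `O(x/Q + Q²/x)` on `q ≤ Q`, while the
tail `q > Q` is bounded by its first term `O(x/Q)`; both errors are `O(x^(1/3))`.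
-/

section SummationByParts

variable {a g : ℕ → ℝ} {B : ℝ} {N M : ℕ}

theorem sum_Icc_mul_eq_summation_by_parts (a g : ℕ → ℝ) (N M : ℕ) :
    ∑ q ∈ Icc (N + 1) M, a q * g q = (∑ j ∈ Icc (N + 1) M, a j) * g M
      + ∑ q ∈ Ico (N + 1) M, (∑ j ∈ Icc (N + 1) q, a j) * (g q - g (q + 1)) := by
  induction M with
  | zero => simp
  | succ M ih =>
    rcases Nat.lt_or_ge M (N + 1) with h | h
    · obtain h' | h' : M + 1 = N + 1 ∨ M + 1 < N + 1 := by omega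
      · rw [h']; simp
      · simp [Icc_eq_empty_of_lt h', Ico_eq_empty_of_le h'.le]
    · rw [sum_Icc_succ_top (by omega), sum_Icc_succ_top (by omega), sum_Ico_succ_top h, ih]
      ring

theorem abs_sum_Icc_mul_le (hA : ∀ k ≤ M, |∑ j ∈ Icc (N + 1) k, a j| ≤ B) (g : ℕ → ℝ) :
    |∑ q ∈ Icc (N + 1) M, a q * g q|
      ≤ B * (|g M| + ∑ q ∈ Ico (N + 1) M, |g q - g (q + 1)|) := by
  rw [sum_Icc_mul_eq_summation_by_parts, mul_add, mul_sum]
  refine (abs_add_le _ _).trans (add_le_add ?_ ((abs_sum_le_sum_abs _ _).trans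
    (sum_le_sum fun q hq => ?_))) <;> rw [abs_mul]
  · exact mul_le_mul_of_nonneg_right (hA M le_rfl) (abs_nonneg _)
  · exact mul_le_mul_of_nonneg_right (hA q (mem_Ico.1 hq).2.le) (abs_nonneg _)

theorem sum_Ico_abs_sub_succ_of_antitone (hg : Antitone g) {m n : ℕ} (h : m ≤ n) :
    ∑ q ∈ Ico m n, |g q - g (q + 1)| = g m - g n := by
  calc ∑ q ∈ Ico m n, |g q - g (q + 1)| = ∑ q ∈ Ico m n, -(g (q + 1) - g q) :=
        sum_congr rfl fun q _ => by rw [abs_of_nonneg (sub_nonneg.2 (hg q.le_succ)), neg_sub]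
    _ = g m - g n := by rw [sum_neg_distrib, sum_Ico_sub g h, neg_sub]

theorem sum_Ico_abs_sub_succ_of_monotone (hg : Monotone g) {m n : ℕ} (h : m ≤ n) :
    ∑ q ∈ Ico m n, |g q - g (q + 1)| = g n - g m := by
  simpa [abs_sub_comm, neg_add_eq_sub] using sum_Ico_abs_sub_succ_of_antitone hg.neg h

theorem abs_sum_Icc_mul_le_of_antitone (hA : ∀ k ≤ M, |∑ j ∈ Icc (N + 1) k, a j| ≤ B)
    (hg : Antitone g) (hg0 : ∀ n, 0 ≤ g n) :
    |∑ q ∈ Icc (N + 1) M, a q * g q| ≤ B * g (N + 1) := by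
  rcases lt_or_ge M (N + 1) with h | h
  · rw [Icc_eq_empty_of_lt h, sum_empty, abs_zero]
    exact mul_nonneg ((abs_nonneg _).trans (hA M le_rfl)) (hg0 _)
  · refine (abs_sum_Icc_mul_le hA g).trans_eq ?_
    rw [sum_Ico_abs_sub_succ_of_antitone hg h, abs_of_nonneg (hg0 M), add_sub_cancel]

theorem abs_sum_Icc_mul_min_le {u v : ℕ → ℝ} {C : ℝ}
    (hA : ∀ k ≤ M, |∑ j ∈ Icc (N + 1) k, a j| ≤ B) (hu : Monotone u) (hv : Antitone v)
    (hu0 : ∀ n, 0 ≤ u n) (hv0 : ∀ n, 0 ≤ v n) (huC : ∀ n, u n ≤ C) (hvC : ∀ n, v n ≤ C) :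
    |∑ q ∈ Icc (N + 1) M, a q * min (u q) (v q)| ≤ 3 * B * C := by
  have hB : 0 ≤ B := (abs_nonneg _).trans (hA M le_rfl)
  have hC : 0 ≤ C := (hu0 0).trans (huC 0)
  rcases lt_or_ge M (N + 1) with h | h
  · rw [Icc_eq_empty_of_lt h, sum_empty, abs_zero]
    positivity
  have hvar : ∑ q ∈ Ico (N + 1) M, |min (u q) (v q) - min (u (q + 1)) (v (q + 1))|
      ≤ (u M - u (N + 1)) + (v (N + 1) - v M) := by
    rw [← sum_Ico_abs_sub_succ_of_monotone hu h, ← sum_Ico_abs_sub_succ_of_antitone hv h,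
      ← sum_add_distrib]
    exact sum_le_sum fun q _ => (abs_min_sub_min_le_max _ _ _ _).trans
      (max_le_add_of_nonneg (abs_nonneg _) (abs_nonneg _))
  refine (abs_sum_Icc_mul_le hA _).trans ?_
  rw [abs_of_nonneg (le_min (hu0 M) (hv0 M))]
  nlinarith [min_le_left (u M) (v M), huC M, hu0 (N + 1), hvC (N + 1), hv0 M]

theorem abs_sum_Icc_neg_one_pow_le_one (N k : ℕ) :
    |∑ j ∈ Icc (N + 1) k, (-1 : ℝ) ^ (j + 1)| ≤ 1 := by
  rw [← Ico_add_one_right_eq_Icc, sum_Ico_eq_sum_range]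
  have h : ∀ i, (-1 : ℝ) ^ (N + 1 + i + 1) = (-1) ^ N * (-1) ^ i := fun i => by
    rw [pow_add, pow_add, pow_add]; ring
  simp_rw [h, ← mul_sum, neg_one_geom_sum, abs_mul, abs_neg_one_pow, one_mul]
  split_ifs <;> simp

end SummationByParts

theorem isBigO_rpow_rpow_atTop_of_le {a b : ℝ} (h : a ≤ b) :
    (fun x : ℝ => x ^ a) =O[atTop] fun x => x ^ b :=
  IsBigO.of_bound 1 <| (eventually_ge_atTop 1).mono fun x hx => by
    rw [Real.norm_of_nonneg (by positivity), Real.norm_of_nonneg (by positivity), one_mul]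
    exact Real.rpow_le_rpow_of_exponent_le hx h

theorem integral_inv_one_add_zero_one : ∫ t in (0 : ℝ)..1, (1 + t)⁻¹ = Real.log 2 := by
  rw [intervalIntegral.integral_comp_add_left (fun u : ℝ => u⁻¹), integral_inv (by norm_num)]
  norm_num

theorem abs_sum_Icc_neg_one_pow_div_sub_log_two_le (Q : ℕ) :
    |∑ q ∈ Icc 1 Q, (-1 : ℝ) ^ (q + 1) / q - Real.log 2| ≤ 1 / (Q + 1) := by
  have hrange : ∑ q ∈ Icc 1 Q, (-1 : ℝ) ^ (q + 1) / q = ∑ i ∈ range Q, (-1 : ℝ) ^ i / (i + 1) := by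
    rw [← Ico_add_one_right_eq_Icc, sum_Ico_eq_sum_range, Nat.add_sub_cancel]
    refine sum_congr rfl fun i _ => ?_
    rw [pow_add, pow_add]
    push_cast
    ring
  have hcont : ContinuousOn (fun t : ℝ => (1 + t)⁻¹) (Set.uIcc 0 1) :=
    ContinuousOn.inv₀ (by fun_prop) fun t ht => by
      rw [Set.uIcc_of_le zero_le_one] at ht; linarith [ht.1]
  have hgeom : ∀ t ∈ Set.uIcc (0 : ℝ) 1,
      ∑ i ∈ range Q, (-t) ^ i = (1 + t)⁻¹ - (-t) ^ Q * (1 + t)⁻¹ := fun t ht => by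
    rw [Set.uIcc_of_le zero_le_one] at ht
    rw [← one_sub_mul, ← sub_neg_eq_add 1 t, ← geom_sum_mul_neg,
      mul_inv_cancel_right₀ (by linarith [ht.1])]
  have hsum : ∑ i ∈ range Q, (-1 : ℝ) ^ i / (i + 1)
      = ∫ t in (0 : ℝ)..1, ∑ i ∈ range Q, (-t) ^ i := by
    rw [intervalIntegral.integral_finsetSum (f := fun i t => (-t) ^ i) fun i _ =>
      (continuous_neg.pow i).intervalIntegrable _ _]
    refine sum_congr rfl fun i _ => ?_
    rw [show (fun t : ℝ => (-t) ^ i) = fun t => (-1) ^ i * t ^ i from funext fun t => neg_pow t i,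
      intervalIntegral.integral_const_mul, integral_pow]
    norm_num
    ring
  have hrem : |∫ t in (0 : ℝ)..1, (-t) ^ Q * (1 + t)⁻¹| ≤ 1 / (Q + 1) := by
    calc |∫ t in (0 : ℝ)..1, (-t) ^ Q * (1 + t)⁻¹| ≤ ∫ t in (0 : ℝ)..1, t ^ Q := by
          rw [← Real.norm_eq_abs]
          refine intervalIntegral.norm_integral_le_of_norm_le zero_le_one
            (Eventually.of_forall fun t ht => ?_) ((continuous_pow Q).intervalIntegrable _ _)
          have ht0 : 0 ≤ t := ht.1.le
          rw [norm_mul, norm_pow, norm_neg, norm_inv, Real.norm_of_nonneg ht0,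
            Real.norm_of_nonneg (by linarith)]
          exact mul_le_of_le_one_right (by positivity) (inv_le_one_of_one_le₀ (by linarith))
      _ = 1 / (Q + 1) := by rw [integral_pow]; norm_num
  rw [hrange, hsum, intervalIntegral.integral_congr hgeom, intervalIntegral.integral_sub
    (f := fun t => (1 + t)⁻¹) (g := fun t => (-t) ^ Q * (1 + t)⁻¹) hcont.intervalIntegrable
    ((continuous_neg.pow Q).continuousOn.mul hcont).intervalIntegrable,
    integral_inv_one_add_zero_one, sub_sub_cancel_left, abs_neg]
  exact hrem

theorem sum_Icc_inv_le_one_add_log (M : ℕ) : ∑ q ∈ Icc 1 M, (q : ℝ)⁻¹ ≤ 1 + Real.log M := by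
  simpa [harmonic_eq_sum_Icc] using harmonic_le_one_add_log M

theorem sum_Icc_sum_divisors_mul_eq {N : ℕ} (c f F : ℕ → ℝ) (hF : ∀ n, N < n → F n = 0) :
    ∑ n ∈ Icc 1 N, (∑ d ∈ n.divisors, c d * f (n / d)) * F n
      = ∑ q ∈ Icc 1 N, f q * ∑ d ∈ Icc 1 N, c d * F (d * q) := by
  have hIcc : Icc 1 N = Ioc 0 N := Icc_add_one_left_eq_Ioc 0 N
  calc ∑ n ∈ Icc 1 N, (∑ d ∈ n.divisors, c d * f (n / d)) * F n
      = ∑ n ∈ Ioc 0 N, ∑ p ∈ Ioc 0 N ×ˢ Ioc 0 N with p.1 * p.2 = n,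
          c p.1 * f p.2 * F (p.1 * p.2) := by
        rw [hIcc]
        refine sum_congr rfl fun n hn => ?_
        rw [← Nat.divisorsAntidiagonal_eq_prod_filter_of_le (mem_Ioc.1 hn).1.ne' (mem_Ioc.1 hn).2,
          sum_mul, ← Nat.sum_divisorsAntidiagonal fun d q => c d * f q * F n]
        exact sum_congr rfl fun p hp => by rw [(Nat.mem_divisorsAntidiagonal.1 hp).1]
    _ = ∑ p ∈ Ioc 0 N ×ˢ Ioc 0 N, c p.1 * f p.2 * F (p.1 * p.2) := by
        rw [sum_fiberwise_eq_sum_filter, sum_filter_of_ne]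
        intro p hp hne
        obtain ⟨⟨hp1, -⟩, hp2, -⟩ := mem_product.1 hp |>.imp mem_Ioc.1 mem_Ioc.1
        exact mem_Ioc.2 ⟨Nat.mul_pos hp1 hp2, not_lt.1 fun h => hne (by rw [hF _ h, mul_zero])⟩
    _ = ∑ q ∈ Icc 1 N, f q * ∑ d ∈ Icc 1 N, c d * F (d * q) := by
        rw [sum_product, sum_comm, hIcc]
        simp only [mul_sum]
        exact sum_congr rfl fun q _ => sum_congr rfl fun d _ => by ring

noncomputable def mollifier (x : ℝ) (n : ℕ) : ℝ := max 0 (1 - n / x)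

section Mollifier

variable {x : ℝ}

theorem mollifier_nonneg (x : ℝ) (n : ℕ) : 0 ≤ mollifier x n := le_max_left _ _

theorem mollifier_le_one (hx : 0 ≤ x) (n : ℕ) : mollifier x n ≤ 1 :=
  max_le zero_le_one (sub_le_self _ (by positivity))

theorem mollifier_antitone (hx : 0 ≤ x) : Antitone (mollifier x) := fun m n h => by
  unfold mollifier; gcongr

theorem mollifier_of_le {n : ℕ} (h : (n : ℝ) ≤ x) : mollifier x n = 1 - n / x :=
  max_eq_right (sub_nonneg.2 (div_le_one_of_le₀ h (n.cast_nonneg.trans h)))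

theorem mollifier_eq_zero {n : ℕ} (hx : 0 < x) (h : x ≤ n) : mollifier x n = 0 :=
  max_eq_left (sub_nonpos.2 ((one_le_div hx).2 h))

theorem max_zero_sub_max_zero_sub_eq_min {s : ℝ} (hs : 0 ≤ s) (r : ℝ) :
    max 0 r - max 0 (r - s) = min s (max 0 r) := by
  simp only [max_def, min_def]
  split_ifs <;> linarith

theorem mollifier_mul_sub_mollifier_mul_succ (hx : 0 ≤ x) (d q : ℕ) :
    mollifier x (d * q) - mollifier x (d * (q + 1)) = min (d / x) (mollifier x (d * q)) := by
  have h : 1 - ((d * (q + 1) : ℕ) : ℝ) / x = 1 - ((d * q : ℕ) : ℝ) / x - d / x := by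
    push_cast; ring
  rw [mollifier, mollifier, h, max_zero_sub_max_zero_sub_eq_min (div_nonneg d.cast_nonneg hx)]

theorem min_div_mollifier_mul_le (d q : ℕ) :
    min ((d : ℝ) / x) (mollifier x (d * q)) ≤ 1 / (q + 1) := by
  rcases le_total ((d : ℝ) / x) (1 / (q + 1)) with h | h
  · exact (min_le_left _ _).trans h
  · refine (min_le_right _ _).trans (max_le (by positivity) ?_)
    have hq : (q : ℝ) / (q + 1) ≤ ((d * q : ℕ) : ℝ) / x := by
      rw [Nat.cast_mul, mul_comm, mul_div_assoc, div_eq_mul_one_div (q : ℝ)]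
      gcongr
    have : 1 - (q : ℝ) / (q + 1) = 1 / (q + 1) := by field_simp; ring
    linarith

theorem sum_Icc_one_sub_div (K : ℕ) (y : ℝ) :
    ∑ d ∈ Icc 1 K, (1 - d / y) = K - K * (K + 1) / (2 * y) := by
  induction K with
  | zero => simp
  | succ K ih =>
    rw [sum_Icc_succ_top (by omega), ih]
    push_cast
    ring

theorem abs_sum_Icc_one_sub_div_sub_le {y : ℝ} (hy : 0 < y) :
    |∑ d ∈ Icc 1 ⌊y⌋₊, (1 - d / y) - (y / 2 - 1 / 2)| ≤ 1 / (8 * y) := by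
  set θ := y - ⌊y⌋₊ with hθ
  have hθ0 : 0 ≤ θ := sub_nonneg.2 (Nat.floor_le hy.le)
  have hθ1 : θ < 1 := by linarith [Nat.lt_floor_add_one y]
  have key : ∑ d ∈ Icc 1 ⌊y⌋₊, (1 - d / y) - (y / 2 - 1 / 2) = (θ - θ ^ 2) / (2 * y) := by
    rw [sum_Icc_one_sub_div, hθ]
    field_simp
    ring
  rw [key, abs_of_nonneg (div_nonneg (by nlinarith) (by positivity)),
    div_le_div_iff₀ (by positivity) (by positivity)]
  nlinarith [sq_nonneg (θ - 1 / 2)]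

end Mollifier

noncomputable def mollifiedSum (c : ℕ → ℝ) (x : ℝ) (q : ℕ) : ℝ :=
  ∑ d ∈ Icc 1 ⌊x⌋₊, c d * mollifier x (d * q)

section MollifiedSum

variable {c : ℕ → ℝ} {x B : ℝ}

theorem mollifiedSum_eq_sub_add (c : ℕ → ℝ) (β x : ℝ) (q : ℕ) :
    mollifiedSum c x q = mollifiedSum (fun d => c d - β) x q + β * mollifiedSum 1 x q := by
  simp only [mollifiedSum, mul_sum, ← sum_add_distrib, Pi.one_apply]
  exact sum_congr rfl fun d _ => by ring

theorem mollifier_mul_antitone (hx : 0 ≤ x) (q : ℕ) : Antitone fun d : ℕ => mollifier x (d * q) :=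
  (mollifier_antitone hx).comp_monotone fun _ _ h => Nat.mul_le_mul_right q h

theorem mollifiedSum_one_antitone (hx : 0 ≤ x) : Antitone (mollifiedSum 1 x) := fun q q' h =>
  sum_le_sum fun d _ => by
    simp only [Pi.one_apply, one_mul]
    exact mollifier_antitone hx (Nat.mul_le_mul_left d h)

theorem abs_mollifiedSum_le (hx : 0 ≤ x) (hA : ∀ k, |∑ j ∈ Icc 1 k, c j| ≤ B) (q : ℕ) :
    |mollifiedSum c x q| ≤ B :=
  calc |mollifiedSum c x q| ≤ B * mollifier x (1 * q) :=
        abs_sum_Icc_mul_le_of_antitone (N := 0) (fun k _ => hA k) (mollifier_mul_antitone hx q)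
          fun _ => mollifier_nonneg _ _
    _ ≤ B := mul_le_of_le_one_right ((abs_nonneg _).trans (hA 0)) (mollifier_le_one hx _)

theorem abs_mollifiedSum_sub_succ_le (hx : 0 ≤ x) (hA : ∀ k, |∑ j ∈ Icc 1 k, c j| ≤ B) (q : ℕ) :
    |mollifiedSum c x q - mollifiedSum c x (q + 1)| ≤ 3 * B * (1 / (q + 1)) := by
  set C : ℝ := 1 / (q + 1)
  have hC : 0 ≤ C := by positivity
  -- `d ↦ min (d / x) (φ_x(dq))` rises and then falls, with maximum at most `C`; capping both
  -- pieces at `C` writes it as the minimum of a monotone and an antitone function.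
  have hdiff : mollifiedSum c x q - mollifiedSum c x (q + 1) = ∑ d ∈ Icc 1 ⌊x⌋₊,
      c d * min (min ((d : ℝ) / x) C) (min (mollifier x (d * q)) C) := by
    rw [mollifiedSum, mollifiedSum, ← sum_sub_distrib]
    refine sum_congr rfl fun d _ => ?_
    rw [← mul_sub, mollifier_mul_sub_mollifier_mul_succ hx, min_min_min_comm, min_self,
      min_eq_left (min_div_mollifier_mul_le d q)]
  rw [hdiff]
  exact abs_sum_Icc_mul_min_le (N := 0) (fun k _ => hA k)
    (fun _ _ h => min_le_min_right C (by gcongr)) (fun _ _ h => min_le_min_right C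
      (mollifier_mul_antitone hx q h)) (fun _ => le_min (by positivity) hC)
    (fun _ => le_min (mollifier_nonneg _ _) hC) (fun _ => min_le_right _ _)
    fun _ => min_le_right _ _

end MollifiedSum

section AlternatingSums

variable {c : ℕ → ℝ} {x B : ℝ}

theorem abs_sum_alternating_mollifiedSum_le (hx : 1 ≤ x) (hA : ∀ k, |∑ j ∈ Icc 1 k, c j| ≤ B) :
    |∑ q ∈ Icc 1 ⌊x⌋₊, (-1 : ℝ) ^ (q + 1) * mollifiedSum c x q| ≤ B * (4 + 3 * Real.log x) := by
  have hx0 : 0 ≤ x := by linarith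
  have hB : 0 ≤ B := (abs_nonneg _).trans (hA 0)
  have hM : (0 : ℝ) < ⌊x⌋₊ := Nat.cast_pos.2 (Nat.floor_pos.2 hx)
  have hvar : ∑ q ∈ Ico 1 ⌊x⌋₊, |mollifiedSum c x q - mollifiedSum c x (q + 1)|
      ≤ 3 * B * (1 + Real.log x) :=
    calc _ ≤ ∑ q ∈ Ico 1 ⌊x⌋₊, 3 * B * (q : ℝ)⁻¹ := sum_le_sum fun q hq => by
          refine (abs_mollifiedSum_sub_succ_le hx0 hA q).trans ?_
          have hq : (0 : ℝ) < q := Nat.cast_pos.2 (mem_Ico.1 hq).1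
          gcongr
          rw [one_div]
          exact inv_anti₀ hq (by linarith)
      _ ≤ ∑ q ∈ Icc 1 ⌊x⌋₊, 3 * B * (q : ℝ)⁻¹ :=
          sum_le_sum_of_subset_of_nonneg Ico_subset_Icc_self fun _ _ _ => by positivity
      _ ≤ 3 * B * (1 + Real.log ⌊x⌋₊) := by
          rw [← mul_sum]
          gcongr
          exact sum_Icc_inv_le_one_add_log _
      _ ≤ 3 * B * (1 + Real.log x) := by
          gcongr
          exact Nat.floor_le hx0
  calc _ ≤ 1 * (|mollifiedSum c x ⌊x⌋₊| + ∑ q ∈ Ico 1 ⌊x⌋₊,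
        |mollifiedSum c x q - mollifiedSum c x (q + 1)|) :=
        abs_sum_Icc_mul_le (N := 0) (fun k _ => abs_sum_Icc_neg_one_pow_le_one 0 k) _
    _ ≤ B * (4 + 3 * Real.log x) := by
        linarith [abs_mollifiedSum_le hx0 hA ⌊x⌋₊]

theorem isBigO_log_sum_alternating_mollifiedSum (hA : ∀ k, |∑ j ∈ Icc 1 k, c j| ≤ B) :
    (fun x => ∑ q ∈ Icc 1 ⌊x⌋₊, (-1 : ℝ) ^ (q + 1) * mollifiedSum c x q) =O[atTop] Real.log := by
  have hB : 0 ≤ B := (abs_nonneg _).trans (hA 0)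
  refine IsBigO.of_bound (7 * B) ?_
  filter_upwards [eventually_ge_atTop (Real.exp 1)] with x hx
  have hx1 : 1 ≤ x := (Real.one_le_exp zero_le_one).trans hx
  have hlog : 1 ≤ Real.log x := (Real.le_log_iff_exp_le (by linarith)).2 hx
  rw [Real.norm_eq_abs, Real.norm_of_nonneg (by linarith)]
  nlinarith [abs_sum_alternating_mollifiedSum_le hx1 hA]

theorem abs_mollifiedSum_one_sub_le (hx : 0 < x) {q : ℕ} (hq : 0 < q) :
    |mollifiedSum 1 x q - (x / (2 * q) - 1 / 2)| ≤ q / (8 * x) := by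
  have hq' : (0 : ℝ) < q := Nat.cast_pos.2 hq
  have heq : ∑ d ∈ Icc 1 ⌊x / q⌋₊, (1 - d / (x / q)) = mollifiedSum 1 x q := by
    refine sum_subset_zero_on_sdiff (Icc_subset_Icc_right (Nat.floor_mono
      (div_le_self hx.le (Nat.one_le_cast.2 hq)))) (fun d hd => ?_) fun d hd => ?_
    · have hd : x / q < d := (Nat.floor_lt (by positivity)).1 (by simp at hd; omega)
      rw [Pi.one_apply, one_mul, mollifier_eq_zero hx]
      push_cast
      exact ((div_lt_iff₀ hq').1 hd).le
    · have hd : (d : ℝ) ≤ x / q := (Nat.le_floor_iff (by positivity)).1 (mem_Icc.1 hd).2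
      rw [Pi.one_apply, one_mul, mollifier_of_le (by push_cast; rwa [le_div_iff₀ hq'] at hd)]
      push_cast
      rw [div_div_eq_mul_div]
  rw [← heq, show x / (2 * q) = x / q / 2 by ring, show (q : ℝ) / (8 * x) = 1 / (8 * (x / q)) by
    field_simp]
  exact abs_sum_Icc_one_sub_div_sub_le (by positivity)

theorem abs_sum_Icc_alternating_mollifiedSum_one_sub_le (hx : 0 < x) (Q : ℕ) :
    |∑ q ∈ Icc 1 Q, (-1 : ℝ) ^ (q + 1) * mollifiedSum 1 x q - Real.log 2 / 2 * x|
      ≤ x / (2 * (Q + 1)) + 1 / 2 + Q ^ 2 / (8 * x) := by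
  set r : ℕ → ℝ := fun q => mollifiedSum 1 x q - (x / (2 * q) - 1 / 2)
  have hsplit : ∑ q ∈ Icc 1 Q, (-1 : ℝ) ^ (q + 1) * mollifiedSum 1 x q - Real.log 2 / 2 * x
      = x / 2 * (∑ q ∈ Icc 1 Q, (-1 : ℝ) ^ (q + 1) / q - Real.log 2)
        - 1 / 2 * ∑ q ∈ Icc 1 Q, (-1 : ℝ) ^ (q + 1)
        + ∑ q ∈ Icc 1 Q, (-1 : ℝ) ^ (q + 1) * r q := by
    have hterm : ∀ q : ℕ, (-1 : ℝ) ^ (q + 1) * mollifiedSum 1 x q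
        = x / 2 * ((-1) ^ (q + 1) / q) - 1 / 2 * (-1) ^ (q + 1) + (-1) ^ (q + 1) * r q :=
      fun q => by simp only [r]; ring
    rw [sum_congr rfl fun q _ => hterm q, sum_add_distrib, sum_sub_distrib, ← mul_sum, ← mul_sum]
    ring
  have hr : |∑ q ∈ Icc 1 Q, (-1 : ℝ) ^ (q + 1) * r q| ≤ Q ^ 2 / (8 * x) :=
    calc _ ≤ ∑ q ∈ Icc 1 Q, (Q : ℝ) / (8 * x) := (abs_sum_le_sum_abs _ _).trans <|
          sum_le_sum fun q hq => by
            rw [abs_mul, abs_neg_one_pow, one_mul]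
            refine (abs_mollifiedSum_one_sub_le hx (mem_Icc.1 hq).1).trans ?_
            gcongr
            exact (mem_Icc.1 hq).2
      _ = Q ^ 2 / (8 * x) := by rw [sum_const, Nat.card_Icc, Nat.add_sub_cancel, nsmul_eq_mul]; ring
  have hlog : |x / 2 * (∑ q ∈ Icc 1 Q, (-1 : ℝ) ^ (q + 1) / q - Real.log 2)|
      ≤ x / (2 * (Q + 1)) := by
    rw [abs_mul, abs_of_pos (by positivity)]
    calc _ ≤ x / 2 * (1 / (Q + 1)) := by gcongr; exact abs_sum_Icc_neg_one_pow_div_sub_log_two_le Q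
      _ = x / (2 * (Q + 1)) := by rw [mul_one_div, div_div]
  have halt : |1 / 2 * ∑ q ∈ Icc 1 Q, (-1 : ℝ) ^ (q + 1)| ≤ 1 / 2 := by
    rw [abs_mul, abs_of_pos one_half_pos]
    linarith [abs_sum_Icc_neg_one_pow_le_one 0 Q]
  rw [hsplit]
  linarith [abs_add_le (x / 2 * (∑ q ∈ Icc 1 Q, (-1 : ℝ) ^ (q + 1) / q - Real.log 2)
    - 1 / 2 * ∑ q ∈ Icc 1 Q, (-1 : ℝ) ^ (q + 1)) (∑ q ∈ Icc 1 Q, (-1 : ℝ) ^ (q + 1) * r q),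
    abs_sub (x / 2 * (∑ q ∈ Icc 1 Q, (-1 : ℝ) ^ (q + 1) / q - Real.log 2))
      (1 / 2 * ∑ q ∈ Icc 1 Q, (-1 : ℝ) ^ (q + 1))]

theorem abs_sum_alternating_mollifiedSum_one_sub_le_of_le (hx : 0 < x) {Q : ℕ} (hQ : Q ≤ ⌊x⌋₊) :
    |∑ q ∈ Icc 1 ⌊x⌋₊, (-1 : ℝ) ^ (q + 1) * mollifiedSum 1 x q - Real.log 2 / 2 * x|
      ≤ x / (Q + 1) + 1 / 2 + (Q + 1) ^ 2 / (8 * x) := by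
  have htail : |∑ q ∈ Icc (Q + 1) ⌊x⌋₊, (-1 : ℝ) ^ (q + 1) * mollifiedSum 1 x q|
      ≤ x / (2 * (Q + 1)) + (Q + 1) / (8 * x) := by
    refine (abs_sum_Icc_mul_le_of_antitone (fun k _ => abs_sum_Icc_neg_one_pow_le_one Q k)
      (mollifiedSum_one_antitone hx.le) fun q => sum_nonneg fun d _ => ?_).trans ?_
    · simpa using mollifier_nonneg x (d * q)
    · have := abs_le.1 (abs_mollifiedSum_one_sub_le hx Q.succ_pos)
      push_cast at this
      linarith
  have hsplit : ∑ q ∈ Icc 1 ⌊x⌋₊, (-1 : ℝ) ^ (q + 1) * mollifiedSum 1 x q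
      = ∑ q ∈ Icc 1 Q, (-1 : ℝ) ^ (q + 1) * mollifiedSum 1 x q
        + ∑ q ∈ Icc (Q + 1) ⌊x⌋₊, (-1 : ℝ) ^ (q + 1) * mollifiedSum 1 x q := by
    have hIcc : ∀ n, Icc 1 n = Ioc 0 n := Icc_add_one_left_eq_Ioc 0
    rw [hIcc, hIcc, Icc_add_one_left_eq_Ioc, sum_Ioc_consecutive _ (Nat.zero_le Q) hQ]
  rw [hsplit, add_sub_right_comm]
  refine (abs_add_le _ _).trans ?_
  have hhead := abs_sum_Icc_alternating_mollifiedSum_one_sub_le hx Q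
  have : (Q : ℝ) ^ 2 + (Q + 1) ≤ (Q + 1) ^ 2 := by nlinarith
  have h8 : (Q : ℝ) ^ 2 / (8 * x) + (Q + 1) / (8 * x) ≤ (Q + 1) ^ 2 / (8 * x) := by
    rw [← add_div]; gcongr
  have h2 : x / (2 * (Q + 1)) + x / (2 * (Q + 1)) = x / (Q + 1) := by field_simp; ring
  linarith

theorem isBigO_sum_alternating_mollifiedSum_one_sub :
    (fun x : ℝ => ∑ q ∈ Icc 1 ⌊x⌋₊, (-1 : ℝ) ^ (q + 1) * mollifiedSum 1 x q - Real.log 2 / 2 * x)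
      =O[atTop] fun x : ℝ => x ^ ((1 : ℝ) / 3) := by
  refine IsBigO.of_bound 2 ?_
  filter_upwards [eventually_ge_atTop 1] with x hx
  set t := x ^ ((1 : ℝ) / 3) with ht
  have ht3 : t ^ 3 = x := by
    rw [ht, ← Real.rpow_natCast, ← Real.rpow_mul (by linarith)]
    norm_num
  have ht1 : 1 ≤ t := Real.one_le_rpow hx (by norm_num)
  set Q := ⌊t ^ 2⌋₊
  have hQ : (Q : ℝ) ≤ t ^ 2 := Nat.floor_le (by positivity)
  have hQ' : t ^ 2 < Q + 1 := Nat.lt_floor_add_one _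
  have hQx : Q ≤ ⌊x⌋₊ := Nat.le_floor (by rw [← ht3]; nlinarith)
  rw [Real.norm_eq_abs, Real.norm_of_nonneg (by positivity)]
  refine (abs_sum_alternating_mollifiedSum_one_sub_le_of_le (by linarith) hQx).trans ?_
  have h1 : x / (Q + 1) ≤ t := by
    rw [div_le_iff₀ (by positivity), ← ht3]; nlinarith
  have hQ2 : (Q + 1 : ℝ) ≤ 2 * t ^ 2 := by nlinarith
  have h2 : (Q + 1 : ℝ) ^ 2 / (8 * x) ≤ t / 2 := by
    rw [div_le_iff₀ (by positivity), ← ht3]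
    nlinarith [mul_le_mul hQ2 hQ2 (by positivity) (by positivity)]
  linarith

end AlternatingSums

def bIndicator (w : ℕ → Letter) (d : ℕ) : ℝ := if w d = Letter.b then 1 else 0

theorem Mw_eq_sum_alternating_mollifiedSum (w : ℕ → Letter) {x : ℝ} (hx : 0 < x) :
    Mw w x = ∑ q ∈ Icc 1 ⌊x⌋₊, (-1 : ℝ) ^ (q + 1) * mollifiedSum (bIndicator w) x q := by
  simp only [mollifiedSum]
  rw [← sum_Icc_sum_divisors_mul_eq _ _ (mollifier x) fun n hn =>
    mollifier_eq_zero hx ((Nat.lt_floor_add_one x).le.trans (by exact_mod_cast hn))]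
  refine sum_congr rfl fun n hn => ?_
  rw [mollifier_of_le ((Nat.cast_le.2 (mem_Icc.1 hn).2).trans (Nat.floor_le hx.le)), Dw]
  push_cast
  simp [bIndicator, ite_mul]

theorem abs_sum_Icc_bIndicator_sub_le {w : ℕ → Letter} {β : ℝ}
    (hbal : ∀ n : ℕ, 1 ≤ n →
      |β * n - (((Finset.Icc 1 n).filter fun j => w j = Letter.b).card : ℝ)| ≤ 1) (k : ℕ) :
    |∑ j ∈ Icc 1 k, (bIndicator w j - β)| ≤ 1 := by
  rcases Nat.eq_zero_or_pos k with rfl | hk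
  · simp
  simp only [sum_sub_distrib, bIndicator]
  rw [sum_boole, sum_const, Nat.card_Icc, Nat.add_sub_cancel,
    nsmul_eq_mul, abs_sub_comm, mul_comm]
  exact hbal k hk

theorem Mw_sub_eq_add_mul (w : ℕ → Letter) (β : ℝ) {x : ℝ} (hx : 0 < x) :
    Mw w x - β * Real.log 2 / 2 * x
      = ∑ q ∈ Icc 1 ⌊x⌋₊, (-1 : ℝ) ^ (q + 1) * mollifiedSum (fun d => bIndicator w d - β) x q
        + β * (∑ q ∈ Icc 1 ⌊x⌋₊, (-1 : ℝ) ^ (q + 1) * mollifiedSum 1 x q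
          - Real.log 2 / 2 * x) := by
  have hterm : ∀ q : ℕ, (-1 : ℝ) ^ (q + 1) * mollifiedSum (bIndicator w) x q
      = (-1) ^ (q + 1) * mollifiedSum (fun d => bIndicator w d - β) x q
        + β * ((-1) ^ (q + 1) * mollifiedSum 1 x q) := fun q => by
    rw [mollifiedSum_eq_sub_add _ β]; ring
  rw [Mw_eq_sum_alternating_mollifiedSum w hx, sum_congr rfl fun q _ => hterm q, sum_add_distrib,
    ← mul_sum]
  ring

theorem mollified_average_asymptotic_general
    (w : ℕ → Letter) (β : ℝ)
    (hbal : ∀ n : ℕ, 1 ≤ n →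
      |β * n - (((Finset.Icc 1 n).filter fun j => w j = Letter.b).card : ℝ)| ≤ 1)
    (δ : ℝ) (hδ : 0 < δ) :
    (fun x : ℝ => Mw w x - β * Real.log 2 / 2 * x)
      =O[atTop] fun x : ℝ => x ^ ((1 : ℝ) / 3 + δ) := by
  have hdiscrepancy := (isBigO_log_sum_alternating_mollifiedSum
    (abs_sum_Icc_bIndicator_sub_le hbal)).trans
      (isLittleO_log_rpow_atTop (by norm_num : (0 : ℝ) < 1 / 3)).isBigO
  have hmain := isBigO_sum_alternating_mollifiedSum_one_sub.const_mul_left β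
  have hsplit := (eventually_gt_atTop 0).mono fun x hx => (Mw_sub_eq_add_mul w β hx).symm
  exact ((hdiscrepancy.add hmain).congr' hsplit EventuallyEq.rfl).trans
    (isBigO_rpow_rpow_atTop_of_le (by linarith))

theorem mollified_average_asymptotic
    (w : ℕ → Letter) (β : ℝ) (hβ0 : 0 < β) (hβ1 : β < 1)
    (hbal : ∀ n : ℕ, 1 ≤ n →
      |β * n - (((Finset.Icc 1 n).filter fun j => w j = Letter.b).card : ℝ)| ≤ 1)
    (δ : ℝ) (hδ : 0 < δ) :
    (fun x : ℝ => Mw w x - β * Real.log 2 / 2 * x)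
      =O[atTop] fun x : ℝ => x ^ ((1 : ℝ) / 3 + δ) :=
  mollified_average_asymptotic_general w β hbal δ hδ
end
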